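/- arXiv:1506.07945 — 2 statements merged into one kernel-verified Lean document; each statement's English description precedes it below -/
import Mathlib

section
/- Let N be a positive integer and n = 2^N - 1. Then for all x, y in ℚ (or any commutative ring), ∑_{m=0}^{n} z_n(m)·x^{s(m)}·y^{s(n-m)} = C(N,2)·y·(x+y)^{N-1}, where C(N,2) = N(N-1)/2. -/
/-!
Split `m < 2 ^ (N + 1)` according to its top bit `N`. Setting that bit moves one unit from the
`y`-exponent `s(n - m)` to the `x`-exponent `s(m)`, and changes `z_n(m)` from `z(m) + N` to
`z(m)`; so the weighted sum satisfies `S_{N+1} = (x + y) S_N + N y (x + y)^N`, where the same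
splitting without the weight gives `∑ x^{s(m)} y^{s(n-m)} = (x + y)^N`. The recursion is solved
by `C(N+1, 2) = C(N, 2) + N`.
-/

/-- Binary sum-of-digits function. -/
def sdig (m : ℕ) : ℕ := (Nat.digits 2 m).sum

/-- The `i`-th digit of `m` in base `b`. -/
def dig (b m i : ℕ) : ℕ := m / b ^ i % b

/-- `z_n(m) = ∑_{k=0}^{N-1} k·(1 - δ(n_k, m_k))`, the weighted count of positions
among the `N` lowest binary digits at which `m` and `n` differ. -/
def zfun (N n m : ℕ) : ℕ :=
  ∑ k ∈ Finset.range N, k * (1 - if dig 2 n k = dig 2 m k then 1 else 0)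

open Finset

lemma sdig_eq_mod_add_sdig_div (m : ℕ) : sdig m = m % 2 + sdig (m / 2) := by
  rcases Nat.eq_zero_or_pos m with rfl | hm
  · simp [sdig]
  · simp [sdig, Nat.digits_def' (by norm_num : 1 < 2) hm]

lemma sdig_add_two_pow {m k : ℕ} (hm : m < 2 ^ k) : sdig (m + 2 ^ k) = sdig m + 1 := by
  induction k generalizing m with
  | zero =>
    obtain rfl : m = 0 := by omega
    simp [sdig]
  | succ k ih =>
    have hdiv : (m + 2 ^ (k + 1)) / 2 = m / 2 + 2 ^ k := by omega
    have hmod : (m + 2 ^ (k + 1)) % 2 = m % 2 := by omega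
    rw [sdig_eq_mod_add_sdig_div (m + 2 ^ (k + 1)), hdiv, hmod, ih (by omega),
      sdig_eq_mod_add_sdig_div m]
    ring

lemma zfun_two_pow_sub_one (N m : ℕ) :
    zfun N (2 ^ N - 1) m = ∑ k ∈ range N, if m.testBit k then 0 else k := by
  refine sum_congr rfl fun k hk => ?_
  rw [mem_range] at hk
  simp only [dig, ← Nat.toNat_testBit, Nat.testBit_two_pow_sub_one, hk]
  cases m.testBit k <;> simp

lemma zfun_two_pow_succ_sub_one_of_lt {K m : ℕ} (hm : m < 2 ^ K) :
    zfun (K + 1) (2 ^ (K + 1) - 1) m = zfun K (2 ^ K - 1) m + K := by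
  simp [zfun_two_pow_sub_one, sum_range_succ, Nat.testBit_lt_two_pow hm]

lemma zfun_two_pow_succ_sub_one_add_two_pow {K m : ℕ} (hm : m < 2 ^ K) :
    zfun (K + 1) (2 ^ (K + 1) - 1) (m + 2 ^ K) = zfun K (2 ^ K - 1) m := by
  rw [zfun_two_pow_sub_one, zfun_two_pow_sub_one, sum_range_succ, add_comm m,
    Nat.testBit_two_pow_add_eq, Nat.testBit_lt_two_pow hm]
  refine (add_zero _).trans (sum_congr rfl fun k hk => ?_)
  rw [Nat.testBit_two_pow_add_gt (mem_range.mp hk)]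

section sdigSum

variable {R : Type*} [CommSemiring R]

def sdigSum (N : ℕ) (f : ℕ → R) (x y : R) : R :=
  ∑ m ∈ range (2 ^ N), f m * x ^ sdig m * y ^ sdig (2 ^ N - 1 - m)

lemma sdigSum_succ (N : ℕ) (f : ℕ → R) (x y : R) :
    sdigSum (N + 1) f x y =
      y * sdigSum N f x y + x * sdigSum N (fun m => f (m + 2 ^ N)) x y := by
  simp only [sdigSum, pow_succ, mul_two, sum_range_add, mul_sum]
  congr 1 <;> refine sum_congr rfl fun m hm => ?_ <;> rw [mem_range] at hm
  · rw [show 2 ^ N + 2 ^ N - 1 - m = 2 ^ N - 1 - m + 2 ^ N by omega,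
      sdig_add_two_pow (by omega), pow_succ]
    ring
  · rw [add_comm (2 ^ N) m, show 2 ^ N + 2 ^ N - 1 - (m + 2 ^ N) = 2 ^ N - 1 - m by omega,
      sdig_add_two_pow hm, pow_succ]
    ring

lemma sdigSum_congr {N : ℕ} {f g : ℕ → R} (h : ∀ m < 2 ^ N, f m = g m) (x y : R) :
    sdigSum N f x y = sdigSum N g x y :=
  sum_congr rfl fun m hm => by rw [h m (mem_range.mp hm)]

lemma sdigSum_add_const (N : ℕ) (f : ℕ → R) (c x y : R) :
    sdigSum N (fun m => f m + c) x y = sdigSum N f x y + c * sdigSum N 1 x y := by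
  simp only [sdigSum, add_mul, sum_add_distrib, mul_sum, Pi.one_apply, one_mul, mul_assoc]

lemma sdigSum_one (N : ℕ) (x y : R) : sdigSum N 1 x y = (x + y) ^ N := by
  induction N with
  | zero => simp [sdigSum, sdig]
  | succ N ih =>
    simp only [sdigSum_succ, Pi.one_apply, ← Pi.one_def, ih, pow_succ]
    ring

lemma sdigSum_zfun (N : ℕ) (x y : R) :
    sdigSum N (fun m => (zfun N (2 ^ N - 1) m : R)) x y = N.choose 2 * y * (x + y) ^ (N - 1) := by
  induction N with
  | zero => simp [sdigSum, zfun]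
  | succ K ih =>
    have hlow : sdigSum K (fun m => (zfun (K + 1) (2 ^ (K + 1) - 1) m : R)) x y =
        sdigSum K (fun m => (zfun K (2 ^ K - 1) m : R) + K) x y :=
      sdigSum_congr (fun m hm => by rw [zfun_two_pow_succ_sub_one_of_lt hm, Nat.cast_add]) x y
    have hhigh : sdigSum K (fun m => (zfun (K + 1) (2 ^ (K + 1) - 1) (m + 2 ^ K) : R)) x y =
        sdigSum K (fun m => (zfun K (2 ^ K - 1) m : R)) x y :=
      sdigSum_congr (fun m hm => by rw [zfun_two_pow_succ_sub_one_add_two_pow hm]) x y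
    rw [sdigSum_succ, hlow, hhigh, sdigSum_add_const, sdigSum_one, ih]
    -- `K - 1` truncates at `K = 0`, where both binomial coefficients vanish.
    rcases K with _ | j
    · simp
    · simp only [Nat.choose_succ_succ (j + 1), Nat.choose_one_right, Nat.add_sub_cancel,
        Nat.cast_add, pow_succ]
      ring

end sdigSum

theorem sum_zfun_weighted_general (N : ℕ) (n : ℕ) (hn : n = 2 ^ N - 1) (x y : ℚ) :
    (∑ m ∈ Finset.range (n + 1), (zfun N n m : ℚ) * x ^ sdig m * y ^ sdig (n - m)) =
      (N.choose 2 : ℚ) * y * (x + y) ^ (N - 1) := by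
  subst hn
  rw [Nat.sub_add_cancel Nat.one_le_two_pow]
  exact sdigSum_zfun N x y

/-- `∑_{m=0}^{n} z_n(m) x^{s(m)} y^{s(n-m)} = C(N,2)·y·(x+y)^{N-1}` for `n = 2^N - 1`. -/
theorem sum_zfun_weighted (N : ℕ) (hN : 0 < N) (n : ℕ) (hn : n = 2 ^ N - 1) (x y : ℚ) :
    (∑ m ∈ Finset.range (n + 1), (zfun N n m : ℚ) * x ^ sdig m * y ^ sdig (n - m)) =
      (N.choose 2 : ℚ) * y * (x + y) ^ (N - 1) :=
  sum_zfun_weighted_general N n hn x y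
end

section
/- Let b ≥ 2 and N ≥ 0 be integers. Then for all x_0,…,x_{N-1}, y_0,…,y_{N-1}, r_0,…,r_{N-1} in ℚ (or any commutative ℚ-algebra), the Sierpiński matrices are multiplicative: S_{b,N}(x_0,…,x_{N-1}; r_0,…,r_{N-1}) · S_{b,N}(y_0,…,y_{N-1}; r_0,…,r_{N-1}) = S_{b,N}(x_0+y_0,…,x_{N-1}+y_{N-1}; r_0,…,r_{N-1}). -/
open scoped Classical

/-- The generalized binomial coefficient `B(x; r; d) = x(x+r)(x+2r)⋯(x+(d-1)r)/d!`. -/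
def genBinom (x r : ℚ) (d : ℕ) : ℚ :=
  (∏ i ∈ Finset.range d, (x + i * r)) / (Nat.factorial d)

/-- The `N`-variable Sierpiński matrix `S_{b,N}(x₀,…,x_{N-1}; r₀,…,r_{N-1})`:
the `b^N × b^N` matrix whose `(j,k)`-entry is `∏_{i<N} B(xᵢ; rᵢ; dᵢ)` when `k ≤ j` and
`k ⪯_b j` (each base-`b` digit of `k` is at most the corresponding digit of `j`),
where `dᵢ` are the base-`b` digits of `j - k`, and `0` otherwise. -/
noncomputable def Sierp (b N : ℕ) (x r : ℕ → ℚ) : Matrix (Fin (b ^ N)) (Fin (b ^ N)) ℚ :=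
  fun j k =>
    if (k : ℕ) ≤ (j : ℕ) ∧ ∀ i, dig b (k : ℕ) i ≤ dig b (j : ℕ) i then
      ∏ i ∈ Finset.range N, genBinom (x i) (r i) (dig b ((j : ℕ) - (k : ℕ)) i)
    else 0

/-!
Writing indices as `q + b * s` with lowest digit `q < b`, the conditions and digits defining
`S_{b,N+1}` split into those of `S_{b,N}` (in the shifted variables) at `s` and those of the
lower-triangular Toeplitz matrix `(B(x₀; r₀; q - q'))_{q,q'}` at `q`. So `S_{b,N+1}` is, up to
reindexing, the Kronecker product of these two matrices, and multiplicativity follows by induction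
from the mixed-product property once it is known for the Toeplitz factor. There it is the
Chu–Vandermonde identity `∑_{e+f=d} B(x; r; e) B(y; r; f) = B(x+y; r; d)`.
-/

open Finset Matrix
open scoped Kronecker

section StepAscPochhammer

variable {R : Type*} [CommSemiring R]

def stepAscPochhammer (x r : R) (d : ℕ) : R :=
  ∏ i ∈ range d, (x + i * r)

theorem stepAscPochhammer_succ (x r : R) (d : ℕ) :
    stepAscPochhammer x r (d + 1) = stepAscPochhammer x r d * (x + d * r) :=
  prod_range_succ _ _

theorem sum_antidiagonal_choose_mul_stepAscPochhammer (x y r : R) (d : ℕ) :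
    ∑ ij ∈ antidiagonal d, (d.choose ij.1 : R) *
      (stepAscPochhammer x r ij.1 * stepAscPochhammer y r ij.2) =
      stepAscPochhammer (x + y) r d := by
  induction d with
  | zero => simp [stepAscPochhammer]
  | succ d ih =>
    rw [sum_antidiagonal_choose_succ_mul
        (fun i j => stepAscPochhammer x r i * stepAscPochhammer y r j),
      stepAscPochhammer_succ, ← ih, sum_mul, ← sum_add_distrib]
    refine sum_congr rfl fun ij hij => ?_
    rw [HasAntidiagonal.mem_antidiagonal] at hij
    rw [← Nat.choose_symm_of_eq_add hij.symm, stepAscPochhammer_succ, stepAscPochhammer_succ,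
      ← hij]
    push_cast
    ring

end StepAscPochhammer

theorem genBinom_eq_stepAscPochhammer_div (x r : ℚ) (d : ℕ) :
    genBinom x r d = stepAscPochhammer x r d / d.factorial :=
  rfl

theorem sum_antidiagonal_genBinom_mul_genBinom (x y r : ℚ) (d : ℕ) :
    ∑ ij ∈ antidiagonal d, genBinom x r ij.1 * genBinom y r ij.2 = genBinom (x + y) r d := by
  rw [genBinom_eq_stepAscPochhammer_div, ← sum_antidiagonal_choose_mul_stepAscPochhammer, sum_div]
  refine sum_congr rfl fun ij hij => ?_
  rw [HasAntidiagonal.mem_antidiagonal] at hij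
  subst hij
  have hchoose : ((ij.1 + ij.2).choose ij.2 : ℚ) ≠ 0 :=
    Nat.cast_ne_zero.2 (Nat.choose_pos (Nat.le_add_left _ _)).ne'
  rw [genBinom_eq_stepAscPochhammer_div, genBinom_eq_stepAscPochhammer_div, div_mul_div_comm,
    ← Nat.add_choose_mul_factorial_mul_factorial, Nat.choose_symm_add]
  push_cast
  rw [mul_assoc, mul_div_mul_left _ _ hchoose]

def lowerToeplitz {R : Type*} [Zero R] (n : ℕ) (f : ℕ → R) : Matrix (Fin n) (Fin n) R :=
  fun i j => if (j : ℕ) ≤ i then f (i - j) else 0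

theorem lowerToeplitz_mul {R : Type*} [Semiring R] (n : ℕ) (f g : ℕ → R) :
    lowerToeplitz n f * lowerToeplitz n g =
      lowerToeplitz n (fun d => ∑ ij ∈ antidiagonal d, f ij.1 * g ij.2) := by
  ext i k
  simp only [mul_apply, lowerToeplitz]
  set F : ℕ → R := fun m =>
    (if m ≤ i then f (i - m) else 0) * (if k ≤ m then g (m - k) else 0)
  rw [Fin.sum_univ_eq_sum_range F n]
  split_ifs with hki
  · have hi : (i : ℕ) + 1 ≤ n := i.isLt
    rw [← sum_subset (range_subset_range.2 hi), range_eq_Ico,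
      ← sum_Ico_consecutive _ (Nat.zero_le k) (by omega : (k : ℕ) ≤ i + 1), sum_eq_zero,
      zero_add, sum_Ico_eq_sum_range, ← Nat.sum_antidiagonal_swap,
      Nat.sum_antidiagonal_eq_sum_range_succ_mk]
    · refine sum_congr (by congr 1; omega) fun c hc => ?_
      rw [mem_range] at hc
      simp only [F, if_pos (by omega : (k : ℕ) + c ≤ i),
        if_pos (by omega : (k : ℕ) ≤ k + c),
        Prod.fst_swap, Prod.snd_swap]
      congr 2 <;> omega
    · intro m hm
      rw [mem_Ico] at hm
      simp [F, if_neg (by omega : ¬(k : ℕ) ≤ m)]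
    · intro m _ hm
      rw [mem_range] at hm
      simp [F, if_neg (by omega : ¬m ≤ (i : ℕ))]
  · refine sum_eq_zero fun m _ => ?_
    simp only [F]
    split_ifs <;> first | omega | simp

theorem dig_zero (b m : ℕ) : dig b m 0 = m % b := by
  simp [dig]

theorem dig_succ (b m i : ℕ) : dig b m (i + 1) = dig b (m / b) i := by
  rw [dig, dig, pow_succ', Nat.div_div_eq_div_mul]

section Digits

variable {b q q' s s' : ℕ}

theorem dig_add_mul_zero (hq : q < b) : dig b (q + b * s) 0 = q := by
  rw [dig_zero, Nat.add_mul_mod_self_left, Nat.mod_eq_of_lt hq]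

theorem dig_add_mul_succ (hq : q < b) (i : ℕ) : dig b (q + b * s) (i + 1) = dig b s i := by
  rw [dig_succ, Nat.add_mul_div_left _ _ (q.zero_le.trans_lt hq), Nat.div_eq_of_lt hq, zero_add]

theorem le_of_forall_dig_le {N k j : ℕ} (hk : k < b ^ N) (h : ∀ i, dig b k i ≤ dig b j i) :
    k ≤ j := by
  induction N generalizing k j with
  | zero =>
    obtain rfl : k = 0 := by simpa using hk
    exact j.zero_le
  | succ N ih =>
    have hlow : k % b ≤ j % b := by simpa only [dig_zero] using h 0
    have hhigh : k / b ≤ j / b :=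
      ih (Nat.div_lt_of_lt_mul (pow_succ' b N ▸ hk)) fun i => by
        simpa only [dig_succ] using h (i + 1)
    rw [← Nat.mod_add_div k b, ← Nat.mod_add_div j b]
    exact Nat.add_le_add hlow (Nat.mul_le_mul_left b hhigh)

theorem forall_dig_add_mul_le_iff (hq : q < b) (hq' : q' < b) :
    (∀ i, dig b (q' + b * s') i ≤ dig b (q + b * s) i) ↔
      q' ≤ q ∧ ∀ i, dig b s' i ≤ dig b s i := by
  rw [← Nat.and_forall_add_one, dig_add_mul_zero hq, dig_add_mul_zero hq']
  simp only [dig_add_mul_succ hq, dig_add_mul_succ hq']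

theorem le_and_forall_dig_add_mul_le_iff {N : ℕ} (hq : q < b) (hq' : q' < b) (hs' : s' < b ^ N) :
    (q' + b * s' ≤ q + b * s ∧ ∀ i, dig b (q' + b * s') i ≤ dig b (q + b * s) i) ↔
      (s' ≤ s ∧ ∀ i, dig b s' i ≤ dig b s i) ∧ q' ≤ q := by
  rw [forall_dig_add_mul_le_iff hq hq']
  constructor
  · rintro ⟨-, hqq, hss⟩
    exact ⟨⟨le_of_forall_dig_le hs' hss, hss⟩, hqq⟩
  · rintro ⟨⟨hle, hss⟩, hqq⟩
    exact ⟨Nat.add_le_add hqq (Nat.mul_le_mul_left b hle), hqq, hss⟩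

theorem add_mul_sub_add_mul (hq : q' ≤ q) (hs : s' ≤ s) :
    q + b * s - (q' + b * s') = q - q' + b * (s - s') := by
  have := Nat.mul_le_mul_left b hs
  rw [Nat.mul_sub]
  omega

end Digits

def finPowSuccEquiv (b N : ℕ) : Fin (b ^ N) × Fin b ≃ Fin (b ^ (N + 1)) :=
  finProdFinEquiv.trans (finCongr (pow_succ b N).symm)

theorem coe_finPowSuccEquiv (b N : ℕ) (sq : Fin (b ^ N) × Fin b) :
    (finPowSuccEquiv b N sq : ℕ) = sq.2 + b * sq.1 := by
  simp [finPowSuccEquiv]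

theorem Sierp_apply_self (b N : ℕ) (x r : ℕ → ℚ) (j : Fin (b ^ N)) :
    Sierp b N x r j j = 1 := by
  rw [Sierp, if_pos ⟨le_rfl, fun _ => le_rfl⟩]
  simp [dig, genBinom]

theorem Sierp_zero (b : ℕ) (x r : ℕ → ℚ) : Sierp b 0 x r = 1 := by
  ext j k
  obtain rfl : j = k := Subsingleton.elim (α := Fin 1) j k
  rw [Sierp_apply_self, one_apply_eq]

theorem submatrix_Sierp_succ (b N : ℕ) (x r : ℕ → ℚ) :
    (Sierp b (N + 1) x r).submatrix (finPowSuccEquiv b N) (finPowSuccEquiv b N) =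
      Sierp b N (fun i => x (i + 1)) (fun i => r (i + 1)) ⊗ₖ
        lowerToeplitz b (genBinom (x 0) (r 0)) := by
  ext ⟨s, q⟩ ⟨s', q'⟩
  simp only [submatrix_apply, kroneckerMap_apply, Sierp, lowerToeplitz, coe_finPowSuccEquiv]
  have hcond := le_and_forall_dig_add_mul_le_iff (s := s) q.isLt q'.isLt s'.isLt
  by_cases hs : (s' : ℕ) ≤ s ∧ ∀ i, dig b s' i ≤ dig b s i
  · by_cases hq : (q' : ℕ) ≤ q
    · rw [if_pos (hcond.2 ⟨hs, hq⟩), if_pos hs, if_pos hq, prod_range_succ',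
        add_mul_sub_add_mul hq hs.1, dig_add_mul_zero (by omega)]
      simp only [dig_add_mul_succ (show (q : ℕ) - q' < b by omega)]
    · rw [if_neg (fun h => hq (hcond.1 h).2), if_neg hq, mul_zero]
  · rw [if_neg (fun h => hs (hcond.1 h).1), if_neg hs, zero_mul]

theorem sierpinski_multiplicative_general (b N : ℕ) (x y r : ℕ → ℚ) :
    Sierp b N x r * Sierp b N y r = Sierp b N (fun i => x i + y i) r := by
  induction N generalizing x y r with
  | zero => rw [Sierp_zero, Sierp_zero, Sierp_zero, one_mul]
  | succ N ih =>
    apply (reindexRingEquiv ℚ (finPowSuccEquiv b N).symm).injective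
    simp only [map_mul, coe_reindexRingEquiv, reindex_apply, Equiv.symm_symm, submatrix_Sierp_succ,
      ← mul_kronecker_mul, ih, lowerToeplitz_mul, sum_antidiagonal_genBinom_mul_genBinom]

/-- **Multiplicativity of the multivariable Sierpiński matrices:**
`S_{b,N}(x; r) · S_{b,N}(y; r) = S_{b,N}(x + y; r)`. -/
theorem sierpinski_multiplicative (b N : ℕ) (hb : 2 ≤ b) (x y r : ℕ → ℚ) :
    Sierp b N x r * Sierp b N y r = Sierp b N (fun i => x i + y i) r :=
  sierpinski_multiplicative_general b N x y r
end
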